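/- Let f(n) be the number of functions c : Fin n → {Empty, Blue, Red} such that no two indices i and i+2 are both non-Empty. Then f(0)=1, f(1)=3, f(2)=9, f(3)=15, and for all n ≥ 4, f(n) = f(n-1) + 2·f(n-3) + 4·f(n-4). -/

import Mathlib

inductive Color : Type
  | Empty | Blue | Red
  deriving DecidableEq

instance : Fintype Color :=
  ⟨{Color.Empty, Color.Blue, Color.Red}, fun x => by cases x <;> simp⟩

/-- Number of Cis₂ positions on the path `P_n`: colorings where no two indices
at distance exactly 2 are both non-`Empty`. -/
def cis2Path (n : ℕ) : ℕ :=
  Fintype.card {c : Fin n → Color //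
    ∀ i j : Fin n, (j : ℕ) = (i : ℕ) + 2 →
      ¬(c i ≠ Color.Empty ∧ c j ≠ Color.Empty)}


/-! Classify a position on `P (n + 4)` by its last two vertices. If the last vertex is `Empty`,
the rest is any position on `P (n + 3)`. If it is coloured (two ways), the vertex two before it
must be `Empty`; the vertex in between is then either `Empty`, leaving any position on
`P (n + 1)`, or coloured (two ways), which also empties the vertex before that and leaves any
position on `P n`. -/

section SnocCounting

variable {α : Type*} [Fintype α] {n : ℕ}

theorem card_subtype_snoc (P : (Fin (n + 1) → α) → Prop) [DecidablePred P] :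
    Fintype.card {c // P c} = ∑ a, Fintype.card {d : Fin n → α // P (Fin.snoc d a)} := by
  rw [← Fintype.card_sigma]
  exact Fintype.card_congr <|
    (((Fin.snocEquiv fun _ => α).subtypeEquiv fun _ => Iff.rfl).symm.trans
      (Equiv.subtypeProdEquivSigmaSubtype fun a d => P (Fin.snoc d a)))

theorem card_subtype_last_eq [DecidableEq α] (P : (Fin (n + 1) → α) → Prop) [DecidablePred P]
    (a : α) :
    Fintype.card {c // P c ∧ c (Fin.last n) = a} =
      Fintype.card {d : Fin n → α // P (Fin.snoc d a)} :=
  Fintype.card_congr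
    { toFun c := ⟨Fin.init c.1, by obtain ⟨c, hc, rfl⟩ := c; simpa using hc⟩
      invFun d := ⟨Fin.snoc d.1 a, d.2, Fin.snoc_last _ _⟩
      left_inv := by rintro ⟨c, -, rfl⟩; simp
      right_inv d := by simp }

end SnocCounting

theorem Color.sum_eq_of_ne_empty {M : Type*} [AddCommMonoid M] (f : Color → M) (b : M)
    (h : ∀ y, y ≠ .Empty → f y = b) : ∑ y, f y = f .Empty + 2 • b := by
  rw [show (Finset.univ : Finset Color) = {.Empty, .Blue, .Red} from rfl,
    Finset.sum_insert (by decide), Finset.sum_pair (by decide), h .Blue (by decide),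
    h .Red (by decide), two_nsmul]

def IsCis2 {n : ℕ} (c : Fin n → Color) : Prop :=
  ∀ i j : Fin n, (j : ℕ) = (i : ℕ) + 2 → ¬(c i ≠ .Empty ∧ c j ≠ .Empty)

instance {n : ℕ} : DecidablePred (@IsCis2 n) := fun c => by unfold IsCis2; infer_instance

theorem cis2Path_eq_card (n : ℕ) : cis2Path n = Fintype.card {c : Fin n → Color // IsCis2 c} :=
  rfl

theorem isCis2_snoc_iff {n : ℕ} (c : Fin n → Color) (y : Color) :
    IsCis2 (Fin.snoc c y : Fin (n + 1) → Color) ↔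
      IsCis2 c ∧ (y ≠ .Empty → ∀ i : Fin n, (i : ℕ) + 2 = n → c i = .Empty) := by
  simp only [IsCis2, Fin.forall_fin_succ', Fin.snoc_castSucc, Fin.snoc_last, Fin.val_castSucc,
    Fin.val_last]
  have hlt (i : Fin n) : (i : ℕ) ≠ n + 2 := by omega
  simp only [forall_and, hlt, false_imp_iff, implies_true, show n ≠ n + 2 by omega, and_true]
  grind

theorem isCis2_snoc_empty {n : ℕ} (c : Fin n → Color) :
    IsCis2 (Fin.snoc c .Empty : Fin (n + 1) → Color) ↔ IsCis2 c := by
  simp [isCis2_snoc_iff]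

theorem isCis2_snoc_of_ne_empty {n : ℕ} (c : Fin (n + 2) → Color) {y : Color}
    (hy : y ≠ .Empty) :
    IsCis2 (Fin.snoc c y : Fin (n + 3) → Color) ↔
      IsCis2 c ∧ c (Fin.last n).castSucc = .Empty := by
  have hpen (i : Fin (n + 2)) : (i : ℕ) = n ↔ i = (Fin.last n).castSucc := by
    simp [Fin.ext_iff]
  simp [isCis2_snoc_iff, hy, hpen]

theorem card_isCis2_last_empty (n : ℕ) :
    Fintype.card {c : Fin (n + 1) → Color // IsCis2 c ∧ c (Fin.last n) = .Empty} =
      cis2Path n := by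
  rw [card_subtype_last_eq, cis2Path_eq_card]
  exact Fintype.card_congr (Equiv.subtypeEquivRight fun c => isCis2_snoc_empty c)

theorem card_isCis2_penultimate_empty (n : ℕ) :
    Fintype.card
        {c : Fin (n + 3) → Color // IsCis2 c ∧ c (Fin.last (n + 1)).castSucc = .Empty} =
      cis2Path (n + 1) + 2 * cis2Path n := by
  rw [card_subtype_snoc, Color.sum_eq_of_ne_empty _ (cis2Path n)]
  · simp only [Fin.snoc_castSucc, isCis2_snoc_empty, card_isCis2_last_empty, smul_eq_mul]
  intro x hx
  simp only [Fin.snoc_castSucc, isCis2_snoc_of_ne_empty _ hx]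
  rw [card_subtype_last_eq]
  simp only [Fin.snoc_castSucc, isCis2_snoc_empty]
  exact card_isCis2_last_empty n

theorem cis2Path_add_four (n : ℕ) :
    cis2Path (n + 4) = cis2Path (n + 3) + 2 * cis2Path (n + 1) + 4 * cis2Path n := by
  rw [cis2Path_eq_card, card_subtype_snoc,
    Color.sum_eq_of_ne_empty _ (cis2Path (n + 1) + 2 * cis2Path n)]
  · simp only [isCis2_snoc_empty, ← cis2Path_eq_card, smul_eq_mul]
    ring
  intro y hy
  rw [← card_isCis2_penultimate_empty]
  exact Fintype.card_congr (Equiv.subtypeEquivRight fun c => isCis2_snoc_of_ne_empty c hy)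

theorem cis2Path_recursion :
    cis2Path 0 = 1 ∧ cis2Path 1 = 3 ∧ cis2Path 2 = 9 ∧ cis2Path 3 = 15 ∧
    ∀ n : ℕ, 4 ≤ n →
      cis2Path n = cis2Path (n - 1) + 2 * cis2Path (n - 3) + 4 * cis2Path (n - 4) := by
  refine ⟨by decide, by decide, by decide, by decide, fun n hn => ?_⟩
  obtain ⟨m, rfl⟩ := Nat.exists_eq_add_of_le' hn
  simpa using cis2Path_add_four m
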